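/- Let A₁, A₂ be bounded operators with closed range on a complex Hilbert space H and u a unit vector. Then for r ≥ 1, |⟨A₁*A₂ u, u⟩|^r ≤ (1/2) ⟨(|A₂|^(2r) + (A₁*A₂A₂†A₁)^r) u, u⟩. -/

import Mathlib

set_option synthInstance.maxHeartbeats 1000000
set_option maxHeartbeats 1000000

open scoped InnerProductSpace
open ContinuousLinearMap

open scoped NNReal

private lemma tangent_rpow_aux {x c r : ℝ} (hx : 0 ≤ x) (hc : 0 ≤ c) (hr : 1 ≤ r) :
    r * c ^ (r - 1) * x - (r - 1) * c ^ r ≤ x ^ r := by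
  rcases eq_or_lt_of_le hc with h | h
  · rw [← h, Real.zero_rpow (one_pos.trans_le hr).ne']
    rcases eq_or_lt_of_le hr with h1 | h1
    · rw [← h1]
      simp [Real.rpow_one, hx]
    · rw [Real.zero_rpow (by linarith : r - 1 ≠ 0)]
      have : (0:ℝ) ≤ x ^ r := Real.rpow_nonneg hx r
      linarith
  · have hs : (-1 : ℝ) ≤ x / c - 1 := by
      have : 0 ≤ x / c := div_nonneg hx h.le
      linarith
    have key := one_add_mul_self_le_rpow_one_add hs hr
    have h2 : (1 + (x/c - 1)) ^ r = x ^ r / c ^ r := by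
      rw [show 1 + (x/c - 1) = x / c by ring, Real.div_rpow hx h.le]
    rw [h2] at key
    have hcr : (0:ℝ) < c ^ r := Real.rpow_pos_of_pos h r
    have h3 : c ^ r * (1 + r * (x/c - 1)) ≤ x ^ r := by
      calc c ^ r * (1 + r * (x/c-1)) ≤ c ^ r * (x ^ r / c ^ r) :=
            mul_le_mul_of_nonneg_left key hcr.le
        _ = x ^ r := by field_simp
    calc r * c ^ (r-1) * x - (r-1) * c ^ r
        = c ^ r * (1 + r * (x/c - 1)) := by
          have hcc : c ^ (r-1) = c ^ r / c := by
            rw [Real.rpow_sub h, Real.rpow_one]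
          rw [hcc]; field_simp; ring
      _ ≤ x ^ r := h3

private lemma tangent_eval_aux {c r : ℝ} (hc : 0 ≤ c) (hr : 1 ≤ r) :
    c ^ r ≤ r * c ^ (r - 1) * c - (r - 1) * c ^ r := by
  have h : c ^ (r - 1) * c = c ^ r := by
    rcases eq_or_lt_of_le hc with h | h
    · rw [← h, Real.zero_rpow (one_pos.trans_le hr).ne']
      ring
    · rw [← Real.rpow_add_one h.ne' (r-1)]; ring_nf
  nlinarith [h]

private lemma inner_re_mono_aux {H : Type*} [NormedAddCommGroup H] [InnerProductSpace ℂ H]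
    [CompleteSpace H] {S T : H →L[ℂ] H} (h : S ≤ T) (u : H) :
    (⟪S u, u⟫_ℂ).re ≤ (⟪T u, u⟫_ℂ).re := by
  have := ((le_def S T).mp h).inner_nonneg_left u
  simp only [sub_apply, inner_sub_left, map_sub, RCLike.re_to_complex] at this
  have h' := (Complex.le_def.mp this).1
  simp only [Complex.zero_re, Complex.sub_re] at h'
  linarith

/-- McCarthy-type inequality: `⟪Tu,u⟫ ^ r ≤ ⟪T^r u, u⟫` for positive `T` and unit `u`. -/
private lemma mccarthy_aux {H : Type*} [NormedAddCommGroup H] [InnerProductSpace ℂ H]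
    [CompleteSpace H] (T : H →L[ℂ] H) (hT : 0 ≤ T) {r : ℝ} (hr : 1 ≤ r)
    (u : H) (hu : ‖u‖ = 1) :
    (⟪T u, u⟫_ℂ).re ^ r ≤ (⟪(T ^ r) u, u⟫_ℂ).re := by
  have hsa : IsSelfAdjoint T := .of_nonneg hT
  have hc : 0 ≤ (⟪T u, u⟫_ℂ).re := by
    have := ((le_def 0 T).mp hT).inner_nonneg_left u
    simpa using (Complex.le_def.mp this).1
  set c : ℝ := (⟪T u, u⟫_ℂ).re
  have hTr : T ^ r = cfc (fun x : ℝ => x ^ r) T := by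
    rw [CFC.rpow_def, cfc_nnreal_eq_real _ T hT]
    refine cfc_congr fun x hx => ?_
    have hx0 : 0 ≤ x := spectrum_nonneg_of_nonneg hT hx
    simp [NNReal.coe_rpow, Real.coe_toNNReal x hx0]
  have hcfc : cfc (fun x : ℝ => r * c ^ (r-1) * x - (r-1) * c ^ r) T
      = (r * c ^ (r-1)) • T - ((r-1) * c ^ r) • 1 := by
    rw [cfc_sub (fun x : ℝ => r * c ^ (r-1) * x) (fun _ => (r-1) * c ^ r) T]
    rw [show (fun x : ℝ => r * c ^ (r-1) * x) = ((r * c ^ (r-1)) • · : ℝ → ℝ) from rfl,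
      cfc_smul_id (r * c ^ (r-1)) T, cfc_const ((r-1) * c ^ r) T]
    simp [Algebra.algebraMap_eq_smul_one]
  have hmono : cfc (fun x : ℝ => r * c ^ (r-1) * x - (r-1) * c ^ r) T
      ≤ cfc (fun x : ℝ => x ^ r) T := by
    refine cfc_mono (fun x hx => ?_) ?_ ?_
    · exact tangent_rpow_aux (spectrum_nonneg_of_nonneg hT hx) hc hr
    · fun_prop
    · exact fun x hx =>
        (Real.continuousAt_rpow_const x r (Or.inr (by linarith))).continuousWithinAt
  rw [hcfc, ← hTr] at hmono
  have h2 := inner_re_mono_aux hmono u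
  have huu : ⟪u, u⟫_ℂ = 1 := by
    rw [inner_self_eq_norm_sq_to_K, hu]; norm_num
  have h3 : (⟪((r * c ^ (r-1)) • T - ((r-1) * c ^ r) • (1 : H →L[ℂ] H)) u, u⟫_ℂ).re
      = r * c ^ (r-1) * c - (r-1) * c ^ r := by
    have h1 : ((r * c ^ (r-1)) • T - ((r-1) * c ^ r) • (1 : H →L[ℂ] H)) u
        = (r * c ^ (r-1)) • T u - ((r-1) * c ^ r) • u := by simp
    rw [h1, RCLike.real_smul_eq_coe_smul (K := ℂ), RCLike.real_smul_eq_coe_smul (K := ℂ),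
      inner_sub_left, inner_smul_left, inner_smul_left, huu, mul_one]
    simp [Complex.conj_ofReal, Complex.re_ofReal_mul]
    exact Or.inl rfl
  rw [h3] at h2
  exact le_trans (tangent_eval_aux hc hr) h2

theorem stmt_19 {H : Type*} [NormedAddCommGroup H] [InnerProductSpace ℂ H]
    [CompleteSpace H] (A₁ A₂ Ad₂ : H →L[ℂ] H)
    (hran₂ : IsClosed (Set.range A₂))
    (h21 : A₂ * Ad₂ * A₂ = A₂) (h22 : Ad₂ * A₂ * Ad₂ = Ad₂)
    (h23 : adjoint (A₂ * Ad₂) = A₂ * Ad₂) (h24 : adjoint (Ad₂ * A₂) = Ad₂ * A₂)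
    (r : ℝ) (hr : 1 ≤ r) (u : H) (hu : ‖u‖ = 1) :
    ‖⟪(adjoint A₁ * A₂) u, u⟫_ℂ‖ ^ r ≤
      (1 / 2) *
        (⟪((CFC.sqrt (adjoint A₂ * A₂)) ^ (2 * r) +
            (adjoint A₁ * A₂ * Ad₂ * A₁) ^ r) u, u⟫_ℂ).re := by
  set P := A₂ * Ad₂ with hP
  set S := adjoint A₂ * A₂ with hSdef
  set T := adjoint A₁ * A₂ * Ad₂ * A₁ with hTdef
  have hPP : P * P = P := by
    calc P * P = (A₂ * Ad₂ * A₂) * Ad₂ := by rw [hP]; noncomm_ring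
      _ = P := by rw [h21]
  have hS : (0 : H →L[ℂ] H) ≤ S := by
    simpa [hSdef, star_eq_adjoint] using star_mul_self_nonneg A₂
  have hTeq : T = star (P * A₁) * (P * A₁) := by
    rw [star_mul, star_eq_adjoint, star_eq_adjoint, h23]
    have h4 : adjoint A₁ * P * (P * A₁) = adjoint A₁ * (P * P) * A₁ := by noncomm_ring
    rw [h4, hPP, hTdef, hP]
    noncomm_ring
  have hT : (0 : H →L[ℂ] H) ≤ T := by
    rw [hTeq]; exact star_mul_self_nonneg _
  -- rewrite the sqrt power
  have hsqrt : (CFC.sqrt S) ^ (2 * r) = S ^ r := by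
    rw [CFC.sqrt_eq_rpow,
      CFC.rpow_rpow_of_exponent_nonneg S (1/2) (2*r) (by norm_num) (by linarith) hS]
    congr 1; ring
  -- inner product identities
  have hSinner : (⟪S u, u⟫_ℂ).re = ‖A₂ u‖ ^ 2 := by
    rw [hSdef, mul_apply_eq_comp, adjoint_inner_left, inner_self_eq_norm_sq_to_K]
    norm_cast
  have hTinner : (⟪T u, u⟫_ℂ).re = ‖P (A₁ u)‖ ^ 2 := by
    rw [hTeq, mul_apply_eq_comp, star_eq_adjoint, adjoint_inner_left, mul_apply_eq_comp,
      inner_self_eq_norm_sq_to_K]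
    norm_cast
  -- Cauchy–Schwarz step
  have hCS : ‖⟪(adjoint A₁ * A₂) u, u⟫_ℂ‖ ≤ ‖A₂ u‖ * ‖P (A₁ u)‖ := by
    have heq : ⟪(adjoint A₁ * A₂) u, u⟫_ℂ = ⟪A₂ u, P (A₁ u)⟫_ℂ := by
      rw [mul_apply_eq_comp, adjoint_inner_left]
      have h1 : A₂ u = P (A₂ u) := by
        conv_lhs => rw [← h21]
        rfl
      conv_lhs => rw [h1]
      rw [← adjoint_inner_left P, h23]
    rw [heq]
    exact norm_inner_le_norm _ _
  -- McCarthy inequalities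
  have hM1 : ((⟪S u, u⟫_ℂ).re) ^ r ≤ (⟪(S ^ r) u, u⟫_ℂ).re := mccarthy_aux S hS hr u hu
  have hM2 : ((⟪T u, u⟫_ℂ).re) ^ r ≤ (⟪(T ^ r) u, u⟫_ℂ).re := mccarthy_aux T hT hr u hu
  rw [hSinner] at hM1
  rw [hTinner] at hM2
  -- expand the RHS
  rw [hsqrt]
  have hRHS : (⟪((S ^ r) + (T ^ r)) u, u⟫_ℂ).re
      = (⟪(S ^ r) u, u⟫_ℂ).re + (⟪(T ^ r) u, u⟫_ℂ).re := by
    rw [add_apply, inner_add_left, Complex.add_re]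
  rw [hRHS]
  -- scalar chain
  set x : ℝ := ‖A₂ u‖
  set y : ℝ := ‖P (A₁ u)‖
  have hx : 0 ≤ x := norm_nonneg _
  have hy : 0 ≤ y := norm_nonneg _
  have hL : 0 ≤ ‖⟪(adjoint A₁ * A₂) u, u⟫_ℂ‖ := norm_nonneg _
  have h0r : (0:ℝ) ≤ r := by linarith
  have step1 : ‖⟪(adjoint A₁ * A₂) u, u⟫_ℂ‖ ^ r ≤ (x * y) ^ r :=
    Real.rpow_le_rpow hL hCS h0r
  have step2 : (x * y) ^ r = x ^ r * y ^ r := Real.mul_rpow hx hy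
  have hxr : (x ^ r) ^ 2 = (x ^ 2) ^ r := by
    rw [← Real.rpow_natCast (x ^ r) 2, ← Real.rpow_natCast x 2,
      ← Real.rpow_mul hx, ← Real.rpow_mul hx]
    norm_num; ring_nf
  have hyr : (y ^ r) ^ 2 = (y ^ 2) ^ r := by
    rw [← Real.rpow_natCast (y ^ r) 2, ← Real.rpow_natCast y 2,
      ← Real.rpow_mul hy, ← Real.rpow_mul hy]
    norm_num; ring_nf
  nlinarith [two_mul_le_add_sq (x ^ r) (y ^ r), step1, step2, hxr, hyr, hM1, hM2]
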